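/- Normal form of pointer races under garbage collection: gcsem(P) is PRF if and only if there is no computation σ1.act1.σ2.act2 ∈ gcsem(P) such that the command of act1 is free(p) with heap(σ1)(p) = a ≠ seg, and the command of act2 involves q.next, q.data, or free(q), or is an assertion containing the pointer variable q, where heap(σ1.act1.σ2)(q) = a. -/
import Mathlib


/-!
A formalization of the framework of Haziza, Holík, Meyer, Wolff,
"Pointer Race Freedom": heaps, concurrent heap-manipulating programs,
the garbage-collected, memory-managed and ownership-respecting semantics,
validity of pointers, (strong) pointer races, and ownership.
-/

namespace PRF

open scoped Classical

noncomputable section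

/-- Pointer expressions over addresses `A`, pointer variables `PV`,
with `n` next-selectors. -/
inductive PExp (A PV : Type) (n : ℕ) : Type where
  | var  : PV → PExp A PV n
  | next : A → Fin n → PExp A PV n

/-- Data expressions over addresses `A` and data variables `DV`. -/
inductive DExp (A DV : Type) : Type where
  | var  : DV → DExp A DV
  | data : A → DExp A DV

/-- Conditions of assert commands: (negated) equalities of pointer or
data variables. -/
inductive Cond (PV DV : Type) : Type where
  | peq : PV → PV → Cond PV DV
  | deq : DV → DV → Cond PV DV
  | not : Cond PV DV → Cond PV DV

/-- Commands of the while-language. -/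
inductive Com (D PV DV : Type) (n : ℕ) : Type where
  | assert    : Cond PV DV → Com D PV DV n
  | malloc    : PV → Com D PV DV n                   -- p := malloc
  | free      : PV → Com D PV DV n                   -- free(p)
  | readNext  : PV → PV → Fin n → Com D PV DV n      -- p := q.next_i
  | writeNext : PV → Fin n → PV → Com D PV DV n      -- p.next_i := q
  | copyP     : PV → PV → Com D PV DV n              -- p := q
  | readData  : DV → PV → Com D PV DV n              -- x := q.data
  | writeData : PV → DV → Com D PV DV n              -- p.data := x
  | opAsgn    : DV → List DV → (List D → D) → Com D PV DV n  -- x := op(x1,…,xk)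

/-- A heap: partial valuations of pointer and data expressions. -/
structure Heap (A D PV DV : Type) (n : ℕ) : Type where
  pval : PExp A PV n → Option A
  dval : DExp A DV → Option D

/-- An update of a heap (applied by overriding where defined). -/
structure Update (A D PV DV : Type) (n : ℕ) : Type where
  pup : PExp A PV n → Option A
  dup : DExp A DV → Option D

/-- An action: an optional (thread, command) pair — `none` only for the
initial base action — together with an update. -/
structure Act (A D PV DV T : Type) (n : ℕ) : Type where
  tc : Option (T × Com D PV DV n)
  up : Update A D PV DV n

/-- The complement of an assert condition. -/
def Cond.negate {PV DV : Type} : Cond PV DV → Cond PV DV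
  | .not b => b
  | b => .not b

/-- Pointer variables occurring in a condition. -/
def Cond.pvars {PV DV : Type} : Cond PV DV → Set PV
  | .peq p q => {p, q}
  | .deq _ _ => ∅
  | .not b => b.pvars

/-- Data variables occurring in a condition. -/
def Cond.dvars {PV DV : Type} : Cond PV DV → Set DV
  | .peq _ _ => ∅
  | .deq x y => {x, y}
  | .not b => b.dvars

/-- Pointer variables used by a command. -/
def Com.pvars {D PV DV : Type} {n : ℕ} : Com D PV DV n → Set PV
  | .assert b => b.pvars
  | .malloc p => {p}
  | .free p => {p}
  | .readNext p q _ => {p, q}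
  | .writeNext p _ q => {p, q}
  | .copyP p q => {p, q}
  | .readData _ q => {q}
  | .writeData p _ => {p}
  | .opAsgn _ _ _ => ∅

/-- Data variables used by a command. -/
def Com.dvars {D PV DV : Type} {n : ℕ} : Com D PV DV n → Set DV
  | .assert b => b.dvars
  | .readData x _ => {x}
  | .writeData _ x => {x}
  | .opAsgn x ys _ => {x} ∪ {y | y ∈ ys}
  | _ => ∅

/-- A concurrent heap-manipulating program: a set of threads `T`, each an
ordinary while-program presented by its control-flow relation `step`;
every variable is shared (`owner = none`) or local to one thread, a thread
uses only shared variables and its own locals, and every control location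
offering `assert b` also offers `assert ¬b`. -/
structure Program (D PV DV T : Type) (n : ℕ) : Type 1 where
  Ctrl : Type
  init : T → Ctrl
  step : T → Ctrl → Com D PV DV n → Ctrl → Prop
  pOwner : PV → Option T
  dOwner : DV → Option T
  assertCompl : ∀ t c b c', step t c (.assert b) c' →
    ∃ c'', step t c (.assert b.negate) c''
  stepPVars : ∀ t c com c', step t c com c' →
    ∀ p ∈ Com.pvars com, pOwner p = none ∨ pOwner p = some t
  stepDVars : ∀ t c com c', step t c com c' →
    ∀ x ∈ Com.dvars com, dOwner x = none ∨ dOwner x = some t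

variable {A D PV DV T : Type} {n : ℕ}

/-- The source address of a pointer expression (`a` for `a.next_i`). -/
def PExp.srcAdr : PExp A PV n → Option A
  | .var _ => none
  | .next a _ => some a

/-- The source address of a data expression (`a` for `a.data`). -/
def DExp.srcAdr : DExp A DV → Option A
  | .var _ => none
  | .data a => some a

/-- The addresses in use in a heap: those occurring in the domain or range
of the pointer valuation or in the domain of the data valuation. -/
def Heap.adr (h : Heap A D PV DV n) : Set A :=
  {a | (∃ pe, h.pval pe ≠ none ∧ PExp.srcAdr pe = some a)
     ∨ (∃ pe, h.pval pe = some a)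
     ∨ (∃ de, h.dval de ≠ none ∧ DExp.srcAdr de = some a)}

/-- Restriction `h|P` of a heap to a set `P` of pointer expressions: keeps
`pval` only on `P`, keeps `dval` on data variables and on `a.data` for the
addresses `a` hit by some pointer expression in `P`. -/
def Heap.restrict (h : Heap A D PV DV n) (P : Set (PExp A PV n)) :
    Heap A D PV DV n where
  pval pe := if pe ∈ P then h.pval pe else none
  dval de := match de with
    | .var x => h.dval (.var x)
    | .data a => if ∃ pe ∈ P, h.pval pe = some a then h.dval (.data a) else none

/-- Applying an update to a heap. -/
def Heap.apply (h : Heap A D PV DV n) (u : Update A D PV DV n) :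
    Heap A D PV DV n where
  pval pe := match u.pup pe with | some a => some a | none => h.pval pe
  dval de := match u.dup de with | some d => some d | none => h.dval de

/-- The totally undefined heap. -/
def Heap.empty : Heap A D PV DV n := ⟨fun _ => none, fun _ => none⟩

/-- `h[pe ↦ a]`. -/
def Heap.pupdate (h : Heap A D PV DV n) (pe : PExp A PV n) (a : A) :
    Heap A D PV DV n :=
  ⟨fun pe' => if pe' = pe then some a else h.pval pe', h.dval⟩

/-- `h[de ↦ d]`. -/
def Heap.dupdate (h : Heap A D PV DV n) (de : DExp A DV) (d : D) :
    Heap A D PV DV n :=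
  ⟨h.pval, fun de' => if de' = de then some d else h.dval de'⟩

/-- The domain of the pointer valuation. -/
def Heap.pdom (h : Heap A D PV DV n) : Set (PExp A PV n) := {pe | h.pval pe ≠ none}

/-- The domain of the data valuation. -/
def Heap.ddom (h : Heap A D PV DV n) : Set (DExp A DV) := {de | h.dval de ≠ none}

/-- heap(τ): the heap resulting from a computation. -/
def heapOf (τ : List (Act A D PV DV T n)) : Heap A D PV DV n :=
  τ.foldl (fun h act => h.apply act.up) Heap.empty

/-- The empty update. -/
def Update.empty : Update A D PV DV n := ⟨fun _ => none, fun _ => none⟩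

/-- The singleton pointer update `[pe ↦ a]`. -/
def Update.pt (pe : PExp A PV n) (a : A) : Update A D PV DV n :=
  ⟨fun pe' => if pe' = pe then some a else none, fun _ => none⟩

/-- The singleton data update `[de ↦ d]`. -/
def Update.dt (de : DExp A DV) (d : D) : Update A D PV DV n :=
  ⟨fun _ => none, fun de' => if de' = de then some d else none⟩

/-- The update of rule (Malloc1): `[p ↦ a, a.data ↦ d, a.next_i ↦ seg]`. -/
def mallocUpdate (seg : A) (p : PV) (a : A) (d : D) : Update A D PV DV n :=
  ⟨fun pe => if pe = PExp.var p then some a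
             else if ∃ i, pe = PExp.next a i then some seg else none,
   fun de => if de = DExp.data a then some d else none⟩

/-- The update of the base action: every pointer variable is set to `seg`,
every data variable to an arbitrary initial value. -/
def baseUpdate (seg : A) (dinit : DV → D) : Update A D PV DV n :=
  ⟨fun pe => match pe with | .var _ => some seg | _ => none,
   fun de => match de with | .var x => some (dinit x) | _ => none⟩

/-- Satisfaction of a condition (with polarity); an assertion and its
negation both pass when an involved pointer holds `seg`. -/
def condSat (seg : A) (h : Heap A D PV DV n) : Bool → Cond PV DV → Prop
  | pol, .not b => condSat seg h (!pol) b
  | pol, .peq p q =>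
      (if pol then h.pval (.var p) = h.pval (.var q)
       else h.pval (.var p) ≠ h.pval (.var q))
      ∨ h.pval (.var p) = some seg ∨ h.pval (.var q) = some seg
  | pol, .deq x y =>
      if pol then h.dval (.var x) = h.dval (.var y)
      else h.dval (.var x) ≠ h.dval (.var y)

/-- One step of the freed-addresses bookkeeping. -/
def freedStep (seg : A) (h : Heap A D PV DV n) (F : Set A)
    (act : Act A D PV DV T n) : Set A :=
  match act.tc with
  | some (_, .free p) =>
      match h.pval (.var p) with
      | some a => if a = seg then F else insert a F
      | none => F
  | some (_, .malloc p) =>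
      match act.up.pup (.var p) with
      | some a => F \ {a}
      | none => F
  | _ => F

def freedAux (seg : A) : Heap A D PV DV n → Set A → List (Act A D PV DV T n) → Set A
  | _, F, [] => F
  | h, F, act :: τ => freedAux seg (h.apply act.up) (freedStep seg h F act) τ

/-- freed(τ): addresses freed and not re-allocated since. -/
def freedOf (seg : A) (τ : List (Act A D PV DV T n)) : Set A :=
  freedAux seg Heap.empty ∅ τ

/-- invalid(a): the pointer expressions invalidated by freeing `a`. -/
def invalidOf (h : Heap A D PV DV n) (a : A) : Set (PExp A PV n) :=
  {pe | h.pval pe = some a} ∪ {pe | ∃ i, pe = PExp.next a i}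

/-- One step of the validity bookkeeping. -/
def validStep (seg : A) (h : Heap A D PV DV n) (V : Set (PExp A PV n))
    (act : Act A D PV DV T n) : Set (PExp A PV n) :=
  match act.tc with
  | some (_, .free p) =>
      match h.pval (.var p) with
      | some a => if a = seg then V else V \ invalidOf h a
      | none => V
  | some (_, .copyP p q) =>
      if PExp.var q ∈ V then insert (PExp.var p) V else V \ {PExp.var p}
  | some (_, .readNext p q i) =>
      match h.pval (.var q) with
      | some a => if PExp.next a i ∈ V then insert (PExp.var p) V else V \ {PExp.var p}
      | none => V \ {PExp.var p}
  | some (_, .writeNext p i q) =>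
      match h.pval (.var p) with
      | some a => if PExp.var q ∈ V then insert (PExp.next a i) V else V \ {PExp.next a i}
      | none => V
  | some (_, .malloc p) =>
      match act.up.pup (.var p) with
      | some a =>
          insert (PExp.var p) V ∪
            {pe | ∃ i, pe = PExp.next a i ∧ act.up.pup (PExp.next a i) ≠ none}
      | none => V
  | _ => V

def validAux (seg : A) : Heap A D PV DV n → Set (PExp A PV n) →
    List (Act A D PV DV T n) → Set (PExp A PV n)
  | _, V, [] => V
  | h, V, act :: τ => validAux seg (h.apply act.up) (validStep seg h V act) τ

/-- valid(τ): the valid pointer expressions after a computation; initially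
all pointer variables are valid. -/
def validOf (seg : A) (τ : List (Act A D PV DV T n)) : Set (PExp A PV n) :=
  validAux seg Heap.empty {pe | ∃ p, pe = PExp.var p} τ

/-- One step of the strong-invalidity bookkeeping: a variable becomes
strongly invalid when its value is obtained by dereferencing an invalid
pointer; strong invalidity is propagated by assignments. -/
def sinvStep (h : Heap A D PV DV n) (V : Set (PExp A PV n)) (S : Set (PV ⊕ DV))
    (act : Act A D PV DV T n) : Set (PV ⊕ DV) :=
  match act.tc with
  | some (_, .readNext p q _) =>
      if PExp.var q ∈ V then S \ {Sum.inl p} else insert (Sum.inl p) S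
  | some (_, .readData x q) =>
      if PExp.var q ∈ V then S \ {Sum.inr x} else insert (Sum.inr x) S
  | some (_, .copyP p q) =>
      if Sum.inl q ∈ S then insert (Sum.inl p) S else S \ {Sum.inl p}
  | some (_, .opAsgn x ys _) =>
      if ∃ y ∈ ys, Sum.inr y ∈ S then insert (Sum.inr x) S else S \ {Sum.inr x}
  | some (_, .malloc p) => S \ {Sum.inl p}
  | _ => S

def sinvAux (seg : A) : Heap A D PV DV n → Set (PExp A PV n) → Set (PV ⊕ DV) →
    List (Act A D PV DV T n) → Set (PV ⊕ DV)
  | _, _, S, [] => S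
  | h, V, S, act :: τ =>
      sinvAux seg (h.apply act.up) (validStep seg h V act) (sinvStep h V S act) τ

/-- The strongly invalid variables after a computation. -/
def sinvOf (seg : A) (τ : List (Act A D PV DV T n)) : Set (PV ⊕ DV) :=
  sinvAux seg Heap.empty {pe | ∃ p, pe = PExp.var p} ∅ τ

/-- An assignment command publishes the owned address `a` if it copies `a`
via a valid pointer into a shared variable, a variable of another thread,
or into the heap outside the owner's cells. -/
def publishedBy (P : Program D PV DV T n) (h : Heap A D PV DV n)
    (V : Set (PExp A PV n)) (W : A → Option T) (com : Com D PV DV n) (a : A) :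
    Prop :=
  ∃ t', W a = some t' ∧
    ((∃ p q, com = .copyP p q ∧ PExp.var q ∈ V ∧ h.pval (.var q) = some a ∧
        P.pOwner p ≠ some t')
     ∨ (∃ p q i b, com = .readNext p q i ∧ h.pval (.var q) = some b ∧
        PExp.next b i ∈ V ∧ h.pval (.next b i) = some a ∧ P.pOwner p ≠ some t')
     ∨ (∃ p i q b, com = .writeNext p i q ∧ PExp.var q ∈ V ∧
        h.pval (.var q) = some a ∧ h.pval (.var p) = some b ∧ W b ≠ some t'))

/-- One step of the ownership bookkeeping: a thread owns an address it
allocated (into one of its local variables) by the most recent allocation,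
until the address is freed or published. -/
def ownedStep (seg : A) (P : Program D PV DV T n) (h : Heap A D PV DV n)
    (V : Set (PExp A PV n)) (W : A → Option T) (act : Act A D PV DV T n) :
    A → Option T := fun a =>
  match act.tc with
  | some (t, .malloc p) =>
      match act.up.pup (.var p) with
      | some b => if a = b then (if P.pOwner p = some t then some t else none) else W a
      | none => W a
  | some (_, .free p) =>
      match h.pval (.var p) with
      | some b => if a = b ∧ b ≠ seg then none else W a
      | none => W a
  | some (_, com) => if publishedBy P h V W com a then none else W a
  | none => W a

def ownedAux (seg : A) (P : Program D PV DV T n) :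
    Heap A D PV DV n → Set (PExp A PV n) → (A → Option T) →
      List (Act A D PV DV T n) → (A → Option T)
  | _, _, W, [] => W
  | h, V, W, act :: τ =>
      ownedAux seg P (h.apply act.up) (validStep seg h V act)
        (ownedStep seg P h V W act) τ

/-- owned(·, τ) as a map from addresses to their owning thread, if any. -/
def ownedOf (seg : A) (P : Program D PV DV T n) (τ : List (Act A D PV DV T n)) :
    A → Option T :=
  ownedAux seg P Heap.empty {pe | ∃ p, pe = PExp.var p} (fun _ => none) τ

/-- The operational semantics: `mm = false` gives the garbage-collected
semantics (only rule (Malloc1)), `mm = true` additionally enables (Malloc2). -/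
inductive Sem (seg : A) (P : Program D PV DV T n) (mm : Bool) :
    List (Act A D PV DV T n) → (T → P.Ctrl) → Prop where
  | base (dinit : DV → D) :
      Sem seg P mm [⟨none, baseUpdate seg dinit⟩] P.init
  | assert {τ ctrl} (t : T) (b : Cond PV DV) (c' : P.Ctrl) :
      Sem seg P mm τ ctrl →
      P.step t (ctrl t) (.assert b) c' →
      condSat seg (heapOf τ) true b →
      Sem seg P mm (τ ++ [⟨some (t, .assert b), Update.empty⟩])
        (Function.update ctrl t c')
  | free {τ ctrl} (t : T) (p : PV) (c' : P.Ctrl) :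
      Sem seg P mm τ ctrl →
      P.step t (ctrl t) (.free p) c' →
      Sem seg P mm (τ ++ [⟨some (t, .free p), Update.empty⟩])
        (Function.update ctrl t c')
  | copyP {τ ctrl} (t : T) (p q : PV) (c' : P.Ctrl) (b : A) :
      Sem seg P mm τ ctrl →
      P.step t (ctrl t) (.copyP p q) c' →
      (heapOf τ).pval (.var q) = some b →
      Sem seg P mm (τ ++ [⟨some (t, .copyP p q), Update.pt (.var p) b⟩])
        (Function.update ctrl t c')
  | readNext {τ ctrl} (t : T) (p q : PV) (i : Fin n) (c' : P.Ctrl) (a b : A) :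
      Sem seg P mm τ ctrl →
      P.step t (ctrl t) (.readNext p q i) c' →
      (heapOf τ).pval (.var q) = some a → a ≠ seg →
      (heapOf τ).pval (.next a i) = some b →
      Sem seg P mm (τ ++ [⟨some (t, .readNext p q i), Update.pt (.var p) b⟩])
        (Function.update ctrl t c')
  | writeNext {τ ctrl} (t : T) (p : PV) (i : Fin n) (q : PV) (c' : P.Ctrl) (a b : A) :
      Sem seg P mm τ ctrl →
      P.step t (ctrl t) (.writeNext p i q) c' →
      (heapOf τ).pval (.var p) = some a → a ≠ seg →
      (heapOf τ).pval (.var q) = some b →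
      Sem seg P mm (τ ++ [⟨some (t, .writeNext p i q), Update.pt (.next a i) b⟩])
        (Function.update ctrl t c')
  | readData {τ ctrl} (t : T) (x : DV) (q : PV) (c' : P.Ctrl) (a : A) (d : D) :
      Sem seg P mm τ ctrl →
      P.step t (ctrl t) (.readData x q) c' →
      (heapOf τ).pval (.var q) = some a → a ≠ seg →
      (heapOf τ).dval (.data a) = some d →
      Sem seg P mm (τ ++ [⟨some (t, .readData x q), Update.dt (.var x) d⟩])
        (Function.update ctrl t c')
  | writeData {τ ctrl} (t : T) (q : PV) (x : DV) (c' : P.Ctrl) (a : A) (d : D) :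
      Sem seg P mm τ ctrl →
      P.step t (ctrl t) (.writeData q x) c' →
      (heapOf τ).pval (.var q) = some a → a ≠ seg →
      (heapOf τ).dval (.var x) = some d →
      Sem seg P mm (τ ++ [⟨some (t, .writeData q x), Update.dt (.data a) d⟩])
        (Function.update ctrl t c')
  | opAsgn {τ ctrl} (t : T) (x : DV) (ys : List DV) (op : List D → D)
      (c' : P.Ctrl) (ds : List D) :
      Sem seg P mm τ ctrl →
      P.step t (ctrl t) (.opAsgn x ys op) c' →
      ys.mapM (fun y => (heapOf τ).dval (.var y)) = some ds →
      Sem seg P mm (τ ++ [⟨some (t, .opAsgn x ys op), Update.dt (.var x) (op ds)⟩])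
        (Function.update ctrl t c')
  | malloc1 {τ ctrl} (t : T) (p : PV) (c' : P.Ctrl) (a : A) (d : D) :
      Sem seg P mm τ ctrl →
      P.step t (ctrl t) (.malloc p) c' →
      a ∉ (heapOf τ).adr →
      Sem seg P mm (τ ++ [⟨some (t, .malloc p), mallocUpdate seg p a d⟩])
        (Function.update ctrl t c')
  | malloc2 {τ ctrl} (t : T) (p : PV) (c' : P.Ctrl) (a : A) :
      mm = true →
      Sem seg P mm τ ctrl →
      P.step t (ctrl t) (.malloc p) c' →
      a ∈ freedOf seg τ →
      Sem seg P mm (τ ++ [⟨some (t, .malloc p), Update.pt (.var p) a⟩])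
        (Function.update ctrl t c')

/-- The garbage-collected semantics gcsem(P). -/
def gcsem (seg : A) (P : Program D PV DV T n) : Set (List (Act A D PV DV T n)) :=
  {τ | ∃ ctrl, Sem seg P false τ ctrl}

/-- The memory-managed semantics mmsem(P). -/
def mmsem (seg : A) (P : Program D PV DV T n) : Set (List (Act A D PV DV T n)) :=
  {τ | ∃ ctrl, Sem seg P true τ ctrl}

/-- The pointer variables a command frees, dereferences, or uses in an
assertion. -/
def racyVars {D PV DV : Type} {n : ℕ} : Com D PV DV n → Set PV
  | .free p => {p}
  | .readNext _ q _ => {q}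
  | .writeNext p _ _ => {p}
  | .readData _ q => {q}
  | .writeData p _ => {p}
  | .assert b => b.pvars
  | _ => ∅

/-- The action `act` raises a pointer race after `τ`. -/
def isPRStep (seg : A) (τ : List (Act A D PV DV T n)) (act : Act A D PV DV T n) :
    Prop :=
  ∃ t com, act.tc = some (t, com) ∧ ∃ p ∈ racyVars com, PExp.var p ∉ validOf seg τ

/-- The computation `σ` is a pointer race. -/
def isPR (seg : A) (σ : List (Act A D PV DV T n)) : Prop :=
  ∃ τ act, σ = τ ++ [act] ∧ isPRStep seg τ act

/-- A set of computations is PRF if it contains no pointer race. -/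
def SetPRF (seg : A) (S : Set (List (Act A D PV DV T n))) : Prop :=
  ∀ σ ∈ S, ¬ isPR seg σ

/-- A computation is PRF if none of its prefixes is a pointer race. -/
def CompPRF (seg : A) (τ : List (Act A D PV DV T n)) : Prop :=
  ∀ σ, σ <+: τ → ¬ isPR seg σ

/-- The action `act` raises a strong pointer race after `τ`. -/
def isSPRStep (seg : A) (τ : List (Act A D PV DV T n)) (act : Act A D PV DV T n) :
    Prop :=
  ∃ t com, act.tc = some (t, com) ∧
    ((∃ p : PV,
        (com = .free p ∨ (∃ i q, com = .writeNext p i q) ∨ (∃ x, com = .writeData p x)) ∧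
        PExp.var p ∉ validOf seg τ)
     ∨ (∃ q : PV,
        ((∃ p i, com = .readNext p q i) ∨ (∃ x, com = .readData x q)) ∧
        Sum.inl q ∈ sinvOf seg τ)
     ∨ (∃ b, com = .assert b ∧
        ((∃ p ∈ Cond.pvars b, Sum.inl p ∈ sinvOf seg τ)
         ∨ (∃ x ∈ Cond.dvars b, Sum.inr x ∈ sinvOf seg τ))))

/-- The computation `σ` is a strong pointer race. -/
def isSPR (seg : A) (σ : List (Act A D PV DV T n)) : Prop :=
  ∃ τ act, σ = τ ++ [act] ∧ isSPRStep seg τ act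

/-- A set of computations is SPRF if it contains no strong pointer race. -/
def SetSPRF (seg : A) (S : Set (List (Act A D PV DV T n))) : Prop :=
  ∀ σ ∈ S, ¬ isSPR seg σ

/-- A computation is SPRF if none of its prefixes is a strong pointer race. -/
def CompSPRF (seg : A) (τ : List (Act A D PV DV T n)) : Prop :=
  ∀ σ, σ <+: τ → ¬ isSPR seg σ

/-- The action `act` extending `τ` violates ownership. -/
def violatesOwnership (seg : A) (P : Program D PV DV T n)
    (τ : List (Act A D PV DV T n)) (act : Act A D PV DV T n) : Prop :=
  ∃ t com, act.tc = some (t, com) ∧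
    ∃ p : PV,
      (com = .free p ∨ (∃ i q, com = .writeNext p i q) ∨ (∃ x, com = .writeData p x)) ∧
      ∃ a t', (heapOf τ).pval (.var p) = some a ∧ ownedOf seg P τ a = some t' ∧
        (t' ≠ t ∨ P.pOwner p = none)

/-- The ownership-respecting semantics resmmsem(P): the computations of
mmsem(P) none of whose actions violates ownership. -/
def resmmsem (seg : A) (P : Program D PV DV T n) : Set (List (Act A D PV DV T n)) :=
  {σ | σ ∈ mmsem seg P ∧ ∀ τ act, (τ ++ [act]) <+: σ → ¬ violatesOwnership seg P τ act}

/-- The extension of an address map to pointer expressions. -/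
def mapPExp (f : A → A) : PExp A PV n → PExp A PV n
  | .var p => .var p
  | .next a i => .next (f a) i

/-- The extension of an address map to data expressions. -/
def mapDExp (f : A → A) : DExp A DV → DExp A DV
  | .var x => .var x
  | .data a => .data (f a)

/-- `f` is a heap isomorphism from `h1` to `h2`: a bijection between the
addresses in use whose extension to expressions (with `f seg = seg`) is a
bijection between the domains and is compatible with the valuations. -/
structure IsHeapIso (seg : A) (h1 h2 : Heap A D PV DV n) (f : A → A) : Prop where
  fseg : f seg = seg
  adrBij : Set.BijOn f h1.adr h2.adr
  pdomBij : Set.BijOn (mapPExp f) h1.pdom h2.pdom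
  ddomBij : Set.BijOn (mapDExp f) h1.ddom h2.ddom
  pcompat : ∀ pe ∈ h1.pdom, h2.pval (mapPExp f pe) = (h1.pval pe).map f
  dcompat : ∀ de ∈ h1.ddom, h2.dval (mapDExp f de) = h1.dval de

/-- `h1 ≅ h2`. -/
def HeapIso (seg : A) (h1 h2 : Heap A D PV DV n) : Prop :=
  ∃ f, IsHeapIso seg h1 h2 f

/-- Heap equivalence of computations: same projection to (thread, command)
pairs and isomorphic valid-restricted heaps. -/
def heapEquiv (seg : A) (τ σ : List (Act A D PV DV T n)) : Prop :=
  τ.map Act.tc = σ.map Act.tc ∧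
  HeapIso seg ((heapOf τ).restrict (validOf seg τ))
    ((heapOf σ).restrict (validOf seg σ))

/-- The owning pointers after `τ`: valid pointer expressions whose target
is owned, together with valid next selectors of owned addresses. -/
def ownpOf (seg : A) (P : Program D PV DV T n) (τ : List (Act A D PV DV T n)) :
    Set (PExp A PV n) :=
  {pe | pe ∈ validOf seg τ ∧
    ((∃ a t, (heapOf τ).pval pe = some a ∧ ownedOf seg P τ a = some t)
     ∨ (∃ a i t, pe = PExp.next a i ∧ ownedOf seg P τ a = some t))}

/-- The target and source addresses of a pointer expression in a heap. -/
def exprAdrs (h : Heap A D PV DV n) (pe : PExp A PV n) : Set A :=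
  {a | h.pval pe = some a} ∪ {a | PExp.srcAdr pe = some a}

/-- A set of owning pointers is coherent if owning pointers sharing a
target or source address are included or excluded together. -/
def Coherent (seg : A) (P : Program D PV DV T n) (τ : List (Act A D PV DV T n))
    (O : Set (PExp A PV n)) : Prop :=
  ∀ pe ∈ ownpOf seg P τ, ∀ pe' ∈ ownpOf seg P τ,
    (∃ a, a ∈ exprAdrs (heapOf τ) pe ∧ a ∈ exprAdrs (heapOf τ) pe') →
    (pe ∈ O ↔ pe' ∈ O)

/-- The addresses occurring in a set of pointer expressions. -/
def adrsOfSet (h : Heap A D PV DV n) (O : Set (PExp A PV n)) : Set A :=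
  ⋃ pe ∈ O, exprAdrs h pe



/-! ### Auxiliary material for the normal-form theorem -/

lemma heapOf_snoc (τ : List (Act A D PV DV T n)) (act : Act A D PV DV T n) :
    heapOf (τ ++ [act]) = (heapOf τ).apply act.up := by
  simp [heapOf]

lemma validAux_snoc (seg : A) (τ : List (Act A D PV DV T n))
    (act : Act A D PV DV T n) :
    ∀ (h : Heap A D PV DV n) (V : Set (PExp A PV n)),
      validAux seg h V (τ ++ [act]) =
        validStep seg (τ.foldl (fun h a => h.apply a.up) h) (validAux seg h V τ) act := by
  induction τ with
  | nil => intro h V; rfl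
  | cons a τ ih =>
      intro h V
      simp only [List.cons_append, validAux, List.foldl_cons]
      exact ih _ _

lemma validOf_snoc (seg : A) (τ : List (Act A D PV DV T n))
    (act : Act A D PV DV T n) :
    validOf seg (τ ++ [act]) = validStep seg (heapOf τ) (validOf seg τ) act := by
  simp [validOf, validAux_snoc, heapOf]

lemma apply_pt_pval (h : Heap A D PV DV n) (pe0 : PExp A PV n) (a : A)
    (pe : PExp A PV n) :
    (h.apply (Update.pt pe0 a)).pval pe = if pe = pe0 then some a else h.pval pe := by
  simp only [Heap.apply, Update.pt]
  by_cases hc : pe = pe0 <;> simp [hc]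

lemma apply_pt_dval (h : Heap A D PV DV n) (pe0 : PExp A PV n) (a : A)
    (de : DExp A DV) :
    (h.apply (Update.pt pe0 a)).dval de = h.dval de := rfl

lemma apply_dt_pval (h : Heap A D PV DV n) (de0 : DExp A DV) (d : D)
    (pe : PExp A PV n) :
    (h.apply (Update.dt de0 d)).pval pe = h.pval pe := rfl

lemma apply_dt_dval (h : Heap A D PV DV n) (de0 : DExp A DV) (d : D)
    (de : DExp A DV) :
    (h.apply (Update.dt de0 d)).dval de = if de = de0 then some d else h.dval de := by
  simp only [Heap.apply, Update.dt]
  by_cases hc : de = de0 <;> simp [hc]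

lemma apply_empty_pval (h : Heap A D PV DV n) (pe : PExp A PV n) :
    (h.apply Update.empty).pval pe = h.pval pe := rfl

lemma apply_empty_dval (h : Heap A D PV DV n) (de : DExp A DV) :
    (h.apply Update.empty).dval de = h.dval de := rfl

lemma apply_malloc_pval (h : Heap A D PV DV n) (seg : A) (p : PV) (a : A) (d : D)
    (pe : PExp A PV n) :
    (h.apply (mallocUpdate seg p a d)).pval pe =
      if pe = PExp.var p then some a
      else if ∃ i, pe = PExp.next a i then some seg else h.pval pe := by
  simp only [Heap.apply, mallocUpdate]
  by_cases h1 : pe = PExp.var p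
  · simp [h1]
  · by_cases h2 : ∃ i, pe = PExp.next a i <;> simp [h1, h2]

lemma apply_malloc_dval (h : Heap A D PV DV n) (seg : A) (p : PV) (a : A) (d : D)
    (de : DExp A DV) :
    (h.apply (mallocUpdate seg p a d)).dval de =
      if de = DExp.data a then some d else h.dval de := by
  simp only [Heap.apply, mallocUpdate]
  by_cases hc : de = DExp.data a <;> simp [hc]

lemma apply_base_pval (h : Heap A D PV DV n) (seg : A) (dinit : DV → D)
    (pe : PExp A PV n) :
    (h.apply (baseUpdate seg dinit)).pval pe =
      match pe with
      | .var _ => some seg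
      | .next _ _ => h.pval pe := by
  cases pe <;> rfl

/-- The address `a` has been freed (while not equal to `seg`) somewhere in `τ`. -/
def Freed (seg : A) (τ : List (Act A D PV DV T n)) (a : A) : Prop :=
  ∃ (σ1 : List (Act A D PV DV T n)) (act1 : Act A D PV DV T n)
    (σ2 : List (Act A D PV DV T n)) (t : T) (p : PV),
    τ = σ1 ++ [act1] ++ σ2 ∧ act1.tc = some (t, Com.free p) ∧
    (heapOf σ1).pval (PExp.var p) = some a ∧ a ≠ seg

lemma freed_nil (seg : A) (a : A) : ¬ Freed seg ([] : List (Act A D PV DV T n)) a := by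
  rintro ⟨σ1, act1, σ2, t, p, heq, -⟩
  have := congrArg List.length heq
  simp at this

lemma freed_snoc_iff (seg : A) (τ : List (Act A D PV DV T n))
    (act : Act A D PV DV T n) (a : A) :
    Freed seg (τ ++ [act]) a ↔
      Freed seg τ a ∨
        ∃ t p, act.tc = some (t, Com.free p) ∧
          (heapOf τ).pval (PExp.var p) = some a ∧ a ≠ seg := by
  constructor
  · rintro ⟨σ1, act1, σ2, t, p, heq, htc, hpv, hne⟩
    rcases σ2.eq_nil_or_concat with rfl | ⟨σ2', z, rfl⟩
    · simp only [List.append_nil] at heq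
      obtain ⟨h1, h2⟩ := List.append_inj' heq rfl
      obtain rfl := h1
      obtain rfl : act1 = act := by simpa using h2.symm
      exact Or.inr ⟨t, p, htc, hpv, hne⟩
    · rw [List.concat_eq_append] at heq
      have heq2 : τ ++ [act] = (σ1 ++ [act1] ++ σ2') ++ [z] := by
        simpa [List.append_assoc] using heq
      obtain ⟨h1, h2⟩ := List.append_inj' heq2 rfl
      exact Or.inl ⟨σ1, act1, σ2', t, p, h1, htc, hpv, hne⟩
  · rintro (⟨σ1, act1, σ2, t, p, rfl, htc, hpv, hne⟩ | ⟨t, p, htc, hpv, hne⟩)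
    · exact ⟨σ1, act1, σ2 ++ [act], t, p, by simp, htc, hpv, hne⟩
    · exact ⟨τ, act, [], t, p, by simp, htc, hpv, hne⟩

lemma freed_mono (seg : A) (τ : List (Act A D PV DV T n))
    (act : Act A D PV DV T n) (a : A) (h : Freed seg τ a) :
    Freed seg (τ ++ [act]) a :=
  (freed_snoc_iff seg τ act a).2 (Or.inl h)

/-- No action of `τ` raises a pointer race. -/
def NoPR (seg : A) (τ : List (Act A D PV DV T n)) : Prop :=
  ∀ ρ (act : Act A D PV DV T n) σ', τ = ρ ++ [act] ++ σ' → ¬ isPRStep seg ρ act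

lemma noPR_of_snoc (seg : A) (τ : List (Act A D PV DV T n))
    (act : Act A D PV DV T n) (h : NoPR seg (τ ++ [act])) : NoPR seg τ := by
  intro ρ a σ' heq
  exact h ρ a (σ' ++ [act]) (by rw [heq]; simp)

lemma noPR_last (seg : A) (τ : List (Act A D PV DV T n))
    (act : Act A D PV DV T n) (h : NoPR seg (τ ++ [act])) :
    ¬ isPRStep seg τ act := h τ act [] (by simp)

/-- The key invariant of pointer-race-free garbage-collected computations. -/
def Inv (seg : A) (τ : List (Act A D PV DV T n)) : Prop :=
  (∀ p : PV, (heapOf τ).pval (PExp.var p) ≠ none) ∧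
  (∀ (pe : PExp A PV n) (a : A), (heapOf τ).pval pe = some a →
      a = seg ∨ (heapOf τ).dval (DExp.data a) ≠ none) ∧
  (∀ a : A, Freed seg τ a →
      (heapOf τ).dval (DExp.data a) ≠ none ∧
      (∀ pe ∈ validOf seg τ, (heapOf τ).pval pe ≠ some a) ∧
      (∀ i : Fin n, PExp.next a i ∉ validOf seg τ)) ∧
  (∀ pe ∉ validOf seg τ, ∀ a : A, (heapOf τ).pval pe = some a →
      Freed seg τ a ∨ ∃ b i, pe = PExp.next b i ∧ Freed seg (τ : List (Act A D PV DV T n)) b)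



lemma sem_snoc {seg : A} {P : Program D PV DV T n} {mm : Bool}
    {τ : List (Act A D PV DV T n)} {act : Act A D PV DV T n} {ctrl : T → P.Ctrl}
    (h : Sem seg P mm (τ ++ [act]) ctrl) :
    τ = [] ∨ ∃ ctrl', Sem seg P mm τ ctrl' := by
  generalize hσ : τ ++ [act] = σ at h
  cases h with
  | base dinit =>
      left
      have := congrArg List.length hσ
      simpa using this
  | assert t b c' hsem hstep hsat =>
      right; obtain ⟨h1, -⟩ := List.append_inj' hσ rfl; subst h1; exact ⟨_, hsem⟩
  | free t p c' hsem hstep =>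
      right; obtain ⟨h1, -⟩ := List.append_inj' hσ rfl; subst h1; exact ⟨_, hsem⟩
  | copyP t p q c' b hsem hstep hq =>
      right; obtain ⟨h1, -⟩ := List.append_inj' hσ rfl; subst h1; exact ⟨_, hsem⟩
  | readNext t p q i c' a b hsem hstep hq hne hnx =>
      right; obtain ⟨h1, -⟩ := List.append_inj' hσ rfl; subst h1; exact ⟨_, hsem⟩
  | writeNext t p i q c' a b hsem hstep hp hne hq =>
      right; obtain ⟨h1, -⟩ := List.append_inj' hσ rfl; subst h1; exact ⟨_, hsem⟩
  | readData t x q c' a d hsem hstep hq hne hd =>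
      right; obtain ⟨h1, -⟩ := List.append_inj' hσ rfl; subst h1; exact ⟨_, hsem⟩
  | writeData t q x c' a d hsem hstep hq hne hd =>
      right; obtain ⟨h1, -⟩ := List.append_inj' hσ rfl; subst h1; exact ⟨_, hsem⟩
  | opAsgn t x ys op c' ds hsem hstep hds =>
      right; obtain ⟨h1, -⟩ := List.append_inj' hσ rfl; subst h1; exact ⟨_, hsem⟩
  | malloc1 t p c' a d hsem hstep hfresh =>
      right; obtain ⟨h1, -⟩ := List.append_inj' hσ rfl; subst h1; exact ⟨_, hsem⟩
  | malloc2 t p c' a hmm hsem hstep hfreed =>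
      right; obtain ⟨h1, -⟩ := List.append_inj' hσ rfl; subst h1; exact ⟨_, hsem⟩

lemma sem_prefix {seg : A} {P : Program D PV DV T n} {mm : Bool} :
    ∀ (rest ρ : List (Act A D PV DV T n)),
      (∃ c, Sem seg P mm (ρ ++ rest) c) → ρ = [] ∨ ∃ c', Sem seg P mm ρ c' := by
  intro rest
  induction rest using List.reverseRecOn with
  | nil => intro ρ h; right; simpa using h
  | append_singleton rs z ih =>
      intro ρ h
      obtain ⟨c, hc⟩ := h
      rw [← List.append_assoc] at hc
      rcases sem_snoc hc with hnil | hsem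
      · left
        rcases List.append_eq_nil_iff.mp hnil with ⟨rfl, -⟩
        rfl
      · exact ih ρ hsem


lemma apply_update_empty (h : Heap A D PV DV n) : h.apply Update.empty = h := rfl

lemma mem_invalidOf {h : Heap A D PV DV n} {a : A} {pe : PExp A PV n} :
    pe ∈ invalidOf h a ↔ h.pval pe = some a ∨ ∃ i, pe = PExp.next a i := by
  simp [invalidOf]

lemma of_not_prstep {seg : A} {τ : List (Act A D PV DV T n)} {t : T}
    {com : Com D PV DV n} {up : Update A D PV DV n}
    (h : ¬ isPRStep seg τ (⟨some (t, com), up⟩ : Act A D PV DV T n)) :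
    ∀ p ∈ racyVars com, PExp.var p ∈ validOf seg τ := by
  intro p hp
  by_contra hc
  exact h ⟨t, com, rfl, p, hp, hc⟩

lemma freed_snoc_not_free {seg : A} {τ : List (Act A D PV DV T n)}
    {act : Act A D PV DV T n}
    (h : ∀ (t : T) (p : PV), act.tc ≠ some (t, Com.free p)) (a : A) :
    Freed seg (τ ++ [act]) a ↔ Freed seg τ a := by
  rw [freed_snoc_iff]
  constructor
  · rintro (hf | ⟨t, p, htc, -⟩)
    · exact hf
    · exact absurd htc (h t p)
  · exact Or.inl

lemma inv_dval_step {seg : A} {τ : List (Act A D PV DV T n)}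
    {act : Act A D PV DV T n}
    (hpv : ∀ pe, (heapOf (τ ++ [act])).pval pe = (heapOf τ).pval pe)
    (hdv : ∀ de, (heapOf τ).dval de ≠ none → (heapOf (τ ++ [act])).dval de ≠ none)
    (hv : validOf seg (τ ++ [act]) = validOf seg τ)
    (hf : ∀ a, Freed seg (τ ++ [act]) a ↔ Freed seg τ a)
    (hτ : Inv seg τ) : Inv seg (τ ++ [act]) := by
  obtain ⟨i1, i2, i3, i4⟩ := hτ
  refine ⟨fun p => by rw [hpv]; exact i1 p, ?_, ?_, ?_⟩
  · intro pe a hpa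
    rcases i2 pe a (by rw [← hpv]; exact hpa) with h1 | h1
    · exact Or.inl h1
    · exact Or.inr (hdv _ h1)
  · intro a hfa
    obtain ⟨d1, d2, d3⟩ := i3 a ((hf a).1 hfa)
    exact ⟨hdv _ d1, fun pe hpe => by rw [hpv]; exact d2 pe (hv ▸ hpe),
      fun i => by rw [hv]; exact d3 i⟩
  · intro pe hpe a hpa
    rcases i4 pe (hv ▸ hpe) a (by rw [← hpv]; exact hpa) with h1 | ⟨b, i, rfl, hb⟩
    · exact Or.inl ((hf a).2 h1)
    · exact Or.inr ⟨b, i, rfl, (hf b).2 hb⟩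

lemma inv_of_sem {seg : A} {P : Program D PV DV T n}
    {τ : List (Act A D PV DV T n)} {ctrl : T → P.Ctrl}
    (h : Sem seg P false τ ctrl) : NoPR seg τ → Inv seg τ := by
  induction h with
  | base dinit =>
      intro _
      refine ⟨?_, ?_, ?_, ?_⟩
      · intro p
        simp [heapOf, Heap.apply, baseUpdate]
      · intro pe a hpa
        cases pe with
        | var p =>
            left
            simp [heapOf, Heap.apply, baseUpdate] at hpa
            exact hpa.symm
        | next b i =>
            exfalso
            simp [heapOf, Heap.apply, baseUpdate, Heap.empty] at hpa
      · intro a hfa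
        exfalso
        rcases (freed_snoc_iff seg [] _ a).1 (by simpa using hfa) with hf | ⟨t, p, htc, -⟩
        · exact freed_nil seg a hf
        · simp at htc
      · intro pe hpe a hpa
        exfalso
        cases pe with
        | var p =>
            refine hpe ?_
            have : validOf seg ([] ++ [(⟨none, baseUpdate seg dinit⟩ : Act A D PV DV T n)])
                = {pe | ∃ p, pe = PExp.var p} := by
              rw [validOf_snoc]; rfl
            simp only [List.nil_append] at this
            rw [this]
            exact ⟨p, rfl⟩
        | next b i =>
            simp [heapOf, Heap.apply, baseUpdate, Heap.empty] at hpa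
  | @assert τ ctrl t b c' hsem hstep hsat ih =>
      intro hnpr
      refine inv_dval_step (fun pe => by rw [heapOf_snoc]; rfl) (fun de hd => by rw [heapOf_snoc]; exact hd)
        (by rw [validOf_snoc]; rfl) (freed_snoc_not_free (by simp)) (ih (noPR_of_snoc _ _ _ hnpr))
  | @free τ ctrl t p c' hsem hstep ih =>
      intro hnpr
      obtain ⟨i1, i2, i3, i4⟩ := ih (noPR_of_snoc _ _ _ hnpr)
      obtain ⟨a0, hp⟩ := Option.ne_none_iff_exists'.mp (i1 p)
      have hh : heapOf (τ ++ [(⟨some (t, Com.free p), Update.empty⟩ : Act A D PV DV T n)])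
          = heapOf τ := by rw [heapOf_snoc]; rfl
      by_cases hseg : a0 = seg
      · refine inv_dval_step (fun pe => by rw [hh]) (fun de hd => by rwa [hh])
          ?_ ?_ ⟨i1, i2, i3, i4⟩
        · rw [validOf_snoc]
          simp [validStep, hp, hseg]
        · intro a
          rw [freed_snoc_iff]
          constructor
          · rintro (hf | ⟨t', p', htc, hpv, hne⟩)
            · exact hf
            · exfalso
              obtain ⟨rfl, rfl⟩ : t = t' ∧ p = p' := by
                simpa using htc
              rw [hp] at hpv
              exact hne (by injection hpv with h'; rw [← h', hseg])
          · exact Or.inl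
      · have hv : validOf seg (τ ++ [(⟨some (t, Com.free p), Update.empty⟩ : Act A D PV DV T n)])
            = validOf seg τ \ invalidOf (heapOf τ) a0 := by
          rw [validOf_snoc]
          simp [validStep, hp, hseg]
        have hfr : ∀ a, Freed seg (τ ++ [(⟨some (t, Com.free p), Update.empty⟩ : Act A D PV DV T n)]) a
            ↔ Freed seg τ a ∨ a = a0 := by
          intro a
          rw [freed_snoc_iff]
          constructor
          · rintro (hf | ⟨t', p', htc, hpv, hne⟩)
            · exact Or.inl hf
            · obtain ⟨rfl, rfl⟩ : t = t' ∧ p = p' := by simpa using htc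
              rw [hp] at hpv
              exact Or.inr (by injection hpv with h'; exact h'.symm)
          · rintro (hf | rfl)
            · exact Or.inl hf
            · exact Or.inr ⟨t, p, rfl, hp, hseg⟩
        refine ⟨fun p' => by rw [hh]; exact i1 p', fun pe a hpa => by rw [hh] at hpa ⊢; exact i2 pe a hpa, ?_, ?_⟩
        · intro a hfa
          rw [hh, hv]
          rcases (hfr a).1 hfa with hf | rfl
          · obtain ⟨d1, d2, d3⟩ := i3 a hf
            exact ⟨d1, fun pe hpe => d2 pe hpe.1, fun i hi => d3 i hi.1⟩
          · refine ⟨?_, ?_, ?_⟩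
            · rcases i2 _ _ hp with h1 | h1
              · exact absurd h1 hseg
              · exact h1
            · intro pe hpe
              exact fun hc => hpe.2 (mem_invalidOf.mpr (Or.inl hc))
            · intro i hi
              exact hi.2 (mem_invalidOf.mpr (Or.inr ⟨i, rfl⟩))
        · intro pe hpe a hpa
          rw [hh] at hpa
          rw [hv] at hpe
          by_cases hmem : pe ∈ validOf seg τ
          · have hinv : pe ∈ invalidOf (heapOf τ) a0 := by
              by_contra hc
              exact hpe ⟨hmem, hc⟩
            rcases mem_invalidOf.mp hinv with h1 | ⟨i, rfl⟩
            · rw [hpa] at h1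
              injection h1 with h1
              exact Or.inl ((hfr a).2 (Or.inr h1))
            · exact Or.inr ⟨a0, i, rfl, (hfr a0).2 (Or.inr rfl)⟩
          · rcases i4 pe hmem a hpa with h1 | ⟨b, i, rfl, hb⟩
            · exact Or.inl ((hfr a).2 (Or.inl h1))
            · exact Or.inr ⟨b, i, rfl, (hfr b).2 (Or.inl hb)⟩
  | @copyP τ ctrl t p q c' b hsem hstep hq ih =>
      intro hnpr
      obtain ⟨i1, i2, i3, i4⟩ := ih (noPR_of_snoc _ _ _ hnpr)
      have hh : ∀ pe, (heapOf (τ ++ [(⟨some (t, Com.copyP p q), Update.pt (PExp.var p) b⟩ : Act A D PV DV T n)])).pval pe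
          = if pe = PExp.var p then some b else (heapOf τ).pval pe := by
        intro pe; rw [heapOf_snoc]; exact apply_pt_pval _ _ _ _
      have hdv : ∀ de, (heapOf (τ ++ [(⟨some (t, Com.copyP p q), Update.pt (PExp.var p) b⟩ : Act A D PV DV T n)])).dval de
          = (heapOf τ).dval de := by
        intro de; rw [heapOf_snoc]; rfl
      have hv : validOf seg (τ ++ [(⟨some (t, Com.copyP p q), Update.pt (PExp.var p) b⟩ : Act A D PV DV T n)])
          = if PExp.var q ∈ validOf seg τ then insert (PExp.var p) (validOf seg τ)
            else validOf seg τ \ {PExp.var p} := by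
        rw [validOf_snoc]; rfl
      have hfr := freed_snoc_not_free (act := (⟨some (t, Com.copyP p q), Update.pt (PExp.var p) b⟩ : Act A D PV DV T n)) (τ := τ) (seg := seg) (by simp)
      refine ⟨?_, ?_, ?_, ?_⟩
      · intro p'
        rw [hh]
        split
        · simp
        · exact i1 p'
      · intro pe a hpa
        rw [hh] at hpa
        rw [hdv]
        split at hpa
        · injection hpa with hba
          subst hba
          exact i2 _ _ hq
        · exact i2 _ _ hpa
      · intro a hfa
        obtain ⟨d1, d2, d3⟩ := i3 a ((hfr a).1 hfa)
        refine ⟨by rw [hdv]; exact d1, ?_, ?_⟩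
        · intro pe hpe
          rw [hh]
          rw [hv] at hpe
          split
          · intro hc
            injection hc with hc
            subst hc
            split at hpe
            · exact d2 _ ‹PExp.var q ∈ validOf seg τ› hq
            · rename_i hep _
              exact hpe.2 (by simp [hep])
          · rename_i hep
            split at hpe
            · rcases hpe with h1 | h1
              · exact absurd h1 hep
              · exact d2 _ h1
            · exact d2 _ hpe.1
        · intro i hi
          rw [hv] at hi
          split at hi
          · rcases hi with h1 | h1
            · exact absurd h1 (by simp)
            · exact d3 i h1
          · exact d3 i hi.1
      · intro pe hpe a hpa
        rw [hh] at hpa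
        rw [hv] at hpe
        split at hpe
        · rename_i hqv
          have hnep : pe ≠ PExp.var p := fun hc => hpe (hc ▸ Set.mem_insert _ _)
          have hnev : pe ∉ validOf seg τ := fun hc => hpe (Set.mem_insert_of_mem _ hc)
          rw [if_neg hnep] at hpa
          rcases i4 pe hnev a hpa with h1 | ⟨b', i, rfl, hb⟩
          · exact Or.inl ((hfr a).2 h1)
          · exact Or.inr ⟨b', i, rfl, (hfr b').2 hb⟩
        · rename_i hqv
          by_cases hep : pe = PExp.var p
          · subst hep
            rw [if_pos rfl] at hpa
            injection hpa with hba
            rw [hba] at hq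
            rcases i4 _ hqv _ hq with h1 | ⟨b', i, heq, -⟩
            · exact Or.inl ((hfr a).2 h1)
            · exact absurd heq (by simp)
          · rw [if_neg hep] at hpa
            have hnev : pe ∉ validOf seg τ := fun hc => hpe ⟨hc, hep⟩
            rcases i4 pe hnev a hpa with h1 | ⟨b', i, rfl, hb⟩
            · exact Or.inl ((hfr a).2 h1)
            · exact Or.inr ⟨b', i, rfl, (hfr b').2 hb⟩
  | @readNext τ ctrl t p q i c' a0 b hsem hstep hq hne hnx ih =>
      intro hnpr
      obtain ⟨i1, i2, i3, i4⟩ := ih (noPR_of_snoc _ _ _ hnpr)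
      have hqv : PExp.var q ∈ validOf seg τ :=
        of_not_prstep (noPR_last _ _ _ hnpr) q (by simp [racyVars])
      have hh : ∀ pe, (heapOf (τ ++ [(⟨some (t, Com.readNext p q i), Update.pt (PExp.var p) b⟩ : Act A D PV DV T n)])).pval pe
          = if pe = PExp.var p then some b else (heapOf τ).pval pe := by
        intro pe; rw [heapOf_snoc]; exact apply_pt_pval _ _ _ _
      have hdv : ∀ de, (heapOf (τ ++ [(⟨some (t, Com.readNext p q i), Update.pt (PExp.var p) b⟩ : Act A D PV DV T n)])).dval de
          = (heapOf τ).dval de := by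
        intro de; rw [heapOf_snoc]; rfl
      have hv : validOf seg (τ ++ [(⟨some (t, Com.readNext p q i), Update.pt (PExp.var p) b⟩ : Act A D PV DV T n)])
          = if PExp.next a0 i ∈ validOf seg τ then insert (PExp.var p) (validOf seg τ)
            else validOf seg τ \ {PExp.var p} := by
        rw [validOf_snoc]
        simp [validStep, hq]
      have hfr := freed_snoc_not_free (act := (⟨some (t, Com.readNext p q i), Update.pt (PExp.var p) b⟩ : Act A D PV DV T n)) (τ := τ) (seg := seg) (by simp)
      refine ⟨?_, ?_, ?_, ?_⟩
      · intro p'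
        rw [hh]
        split
        · simp
        · exact i1 p'
      · intro pe a hpa
        rw [hh] at hpa
        rw [hdv]
        split at hpa
        · injection hpa with hba
          subst hba
          exact i2 _ _ hnx
        · exact i2 _ _ hpa
      · intro a hfa
        obtain ⟨d1, d2, d3⟩ := i3 a ((hfr a).1 hfa)
        refine ⟨by rw [hdv]; exact d1, ?_, ?_⟩
        · intro pe hpe
          rw [hh]
          rw [hv] at hpe
          split
          · intro hc
            injection hc with hc
            subst hc
            split at hpe
            · exact d2 _ ‹PExp.next a0 i ∈ validOf seg τ› hnx
            · rename_i hep _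
              exact hpe.2 (by simp [hep])
          · rename_i hep
            split at hpe
            · rcases hpe with h1 | h1
              · exact absurd h1 hep
              · exact d2 _ h1
            · exact d2 _ hpe.1
        · intro j hj
          rw [hv] at hj
          split at hj
          · rcases hj with h1 | h1
            · exact absurd h1 (by simp)
            · exact d3 j h1
          · exact d3 j hj.1
      · intro pe hpe a hpa
        rw [hh] at hpa
        rw [hv] at hpe
        split at hpe
        · rename_i hxv
          have hnep : pe ≠ PExp.var p := fun hc => hpe (hc ▸ Set.mem_insert _ _)
          have hnev : pe ∉ validOf seg τ := fun hc => hpe (Set.mem_insert_of_mem _ hc)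
          rw [if_neg hnep] at hpa
          rcases i4 pe hnev a hpa with h1 | ⟨b', j, rfl, hb⟩
          · exact Or.inl ((hfr a).2 h1)
          · exact Or.inr ⟨b', j, rfl, (hfr b').2 hb⟩
        · rename_i hxv
          by_cases hep : pe = PExp.var p
          · subst hep
            rw [if_pos rfl] at hpa
            injection hpa with hba
            rw [hba] at hnx
            rcases i4 _ hxv _ hnx with h1 | ⟨b', j, heq, hb⟩
            · exact Or.inl ((hfr a).2 h1)
            · exfalso
              obtain ⟨rfl, -⟩ : b' = a0 ∧ j = i := by
                injection heq with h1 h2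
                exact ⟨h1.symm, h2.symm⟩
              exact (i3 b' hb).2.1 _ hqv hq
          · rw [if_neg hep] at hpa
            have hnev : pe ∉ validOf seg τ := fun hc => hpe ⟨hc, hep⟩
            rcases i4 pe hnev a hpa with h1 | ⟨b', j, rfl, hb⟩
            · exact Or.inl ((hfr a).2 h1)
            · exact Or.inr ⟨b', j, rfl, (hfr b').2 hb⟩
  | @writeNext τ ctrl t p i q c' a0 b hsem hstep hp hne hq ih =>
      intro hnpr
      obtain ⟨i1, i2, i3, i4⟩ := ih (noPR_of_snoc _ _ _ hnpr)
      have hpv : PExp.var p ∈ validOf seg τ :=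
        of_not_prstep (noPR_last _ _ _ hnpr) p (by simp [racyVars])
      have hh : ∀ pe, (heapOf (τ ++ [(⟨some (t, Com.writeNext p i q), Update.pt (PExp.next a0 i) b⟩ : Act A D PV DV T n)])).pval pe
          = if pe = PExp.next a0 i then some b else (heapOf τ).pval pe := by
        intro pe; rw [heapOf_snoc]; exact apply_pt_pval _ _ _ _
      have hdv : ∀ de, (heapOf (τ ++ [(⟨some (t, Com.writeNext p i q), Update.pt (PExp.next a0 i) b⟩ : Act A D PV DV T n)])).dval de
          = (heapOf τ).dval de := by
        intro de; rw [heapOf_snoc]; rfl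
      have hv : validOf seg (τ ++ [(⟨some (t, Com.writeNext p i q), Update.pt (PExp.next a0 i) b⟩ : Act A D PV DV T n)])
          = if PExp.var q ∈ validOf seg τ then insert (PExp.next a0 i) (validOf seg τ)
            else validOf seg τ \ {PExp.next a0 i} := by
        rw [validOf_snoc]
        simp [validStep, hp]
      have hfr := freed_snoc_not_free (act := (⟨some (t, Com.writeNext p i q), Update.pt (PExp.next a0 i) b⟩ : Act A D PV DV T n)) (τ := τ) (seg := seg) (by simp)
      refine ⟨?_, ?_, ?_, ?_⟩
      · intro p'
        rw [hh]
        split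
        · simp
        · exact i1 p'
      · intro pe a hpa
        rw [hh] at hpa
        rw [hdv]
        split at hpa
        · injection hpa with hba
          subst hba
          exact i2 _ _ hq
        · exact i2 _ _ hpa
      · intro a hfa
        obtain ⟨d1, d2, d3⟩ := i3 a ((hfr a).1 hfa)
        have ha0 : a0 ≠ a := by
          intro hc
          exact d2 _ hpv (hc ▸ hp)
        refine ⟨by rw [hdv]; exact d1, ?_, ?_⟩
        · intro pe hpe
          rw [hh]
          rw [hv] at hpe
          split
          · intro hc
            injection hc with hc
            subst hc
            split at hpe
            · exact d2 _ ‹PExp.var q ∈ validOf seg τ› hq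
            · rename_i hep _
              exact hpe.2 (by simp [hep])
          · rename_i hep
            split at hpe
            · rcases hpe with h1 | h1
              · exact absurd h1 hep
              · exact d2 _ h1
            · exact d2 _ hpe.1
        · intro j hj
          rw [hv] at hj
          split at hj
          · rcases hj with h1 | h1
            · exact ha0 (by injection h1 with h1 _; exact h1.symm)
            · exact d3 j h1
          · exact d3 j hj.1
      · intro pe hpe a hpa
        rw [hh] at hpa
        rw [hv] at hpe
        split at hpe
        · rename_i hqv
          have hnep : pe ≠ PExp.next a0 i := fun hc => hpe (hc ▸ Set.mem_insert _ _)
          have hnev : pe ∉ validOf seg τ := fun hc => hpe (Set.mem_insert_of_mem _ hc)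
          rw [if_neg hnep] at hpa
          rcases i4 pe hnev a hpa with h1 | ⟨b', j, rfl, hb⟩
          · exact Or.inl ((hfr a).2 h1)
          · exact Or.inr ⟨b', j, rfl, (hfr b').2 hb⟩
        · rename_i hqv
          by_cases hep : pe = PExp.next a0 i
          · subst hep
            rw [if_pos rfl] at hpa
            injection hpa with hba
            rw [hba] at hq
            rcases i4 _ hqv _ hq with h1 | ⟨b', j, heq, -⟩
            · exact Or.inl ((hfr a).2 h1)
            · exact absurd heq (by simp)
          · rw [if_neg hep] at hpa
            have hnev : pe ∉ validOf seg τ := fun hc => hpe ⟨hc, hep⟩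
            rcases i4 pe hnev a hpa with h1 | ⟨b', j, rfl, hb⟩
            · exact Or.inl ((hfr a).2 h1)
            · exact Or.inr ⟨b', j, rfl, (hfr b').2 hb⟩
  | @readData τ ctrl t x q c' a0 d hsem hstep hq hne hd ih =>
      intro hnpr
      refine inv_dval_step (fun pe => by rw [heapOf_snoc]; rfl) ?_
        (by rw [validOf_snoc]; rfl) (freed_snoc_not_free (by simp)) (ih (noPR_of_snoc _ _ _ hnpr))
      intro de hde
      rw [heapOf_snoc, apply_dt_dval]
      split
      · simp
      · exact hde
  | @writeData τ ctrl t q x c' a0 d hsem hstep hq hne hd ih =>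
      intro hnpr
      refine inv_dval_step (fun pe => by rw [heapOf_snoc]; rfl) ?_
        (by rw [validOf_snoc]; rfl) (freed_snoc_not_free (by simp)) (ih (noPR_of_snoc _ _ _ hnpr))
      intro de hde
      rw [heapOf_snoc, apply_dt_dval]
      split
      · simp
      · exact hde
  | @opAsgn τ ctrl t x ys op c' ds hsem hstep hds ih =>
      intro hnpr
      refine inv_dval_step (fun pe => by rw [heapOf_snoc]; rfl) ?_
        (by rw [validOf_snoc]; rfl) (freed_snoc_not_free (by simp)) (ih (noPR_of_snoc _ _ _ hnpr))
      intro de hde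
      rw [heapOf_snoc, apply_dt_dval]
      split
      · simp
      · exact hde
  | @malloc1 τ ctrl t p c' a0 d hsem hstep hfresh ih =>
      intro hnpr
      obtain ⟨i1, i2, i3, i4⟩ := ih (noPR_of_snoc _ _ _ hnpr)
      have hh : ∀ pe, (heapOf (τ ++ [(⟨some (t, Com.malloc p), mallocUpdate seg p a0 d⟩ : Act A D PV DV T n)])).pval pe
          = if pe = PExp.var p then some a0
            else if ∃ j, pe = PExp.next a0 j then some seg else (heapOf τ).pval pe := by
        intro pe; rw [heapOf_snoc]; exact apply_malloc_pval _ _ _ _ _ _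
      have hdv : ∀ de, (heapOf (τ ++ [(⟨some (t, Com.malloc p), mallocUpdate seg p a0 d⟩ : Act A D PV DV T n)])).dval de
          = if de = DExp.data a0 then some d else (heapOf τ).dval de := by
        intro de; rw [heapOf_snoc]; exact apply_malloc_dval _ _ _ _ _ _
      have hv : validOf seg (τ ++ [(⟨some (t, Com.malloc p), mallocUpdate seg p a0 d⟩ : Act A D PV DV T n)])
          = insert (PExp.var p) (validOf seg τ) ∪ {pe | ∃ j, pe = PExp.next a0 j} := by
        rw [validOf_snoc]
        have hpup : (mallocUpdate seg p a0 d : Update A D PV DV n).pup (PExp.var p) = some a0 := by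
          simp [mallocUpdate]
        simp only [validStep, hpup]
        congr 1
        ext pe
        simp only [Set.mem_setOf_eq]
        constructor
        · rintro ⟨j, rfl, -⟩
          exact ⟨j, rfl⟩
        · rintro ⟨j, rfl⟩
          refine ⟨j, rfl, ?_⟩
          simp [mallocUpdate]
      have hfr := freed_snoc_not_free (act := (⟨some (t, Com.malloc p), mallocUpdate seg p a0 d⟩ : Act A D PV DV T n)) (τ := τ) (seg := seg) (by simp)
      refine ⟨?_, ?_, ?_, ?_⟩
      · intro p'
        rw [hh]
        split
        · simp
        · split
          · simp
          · exact i1 p'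
      · intro pe a hpa
        rw [hh] at hpa
        rw [hdv]
        split at hpa
        · injection hpa with hba
          subst hba
          right
          simp
        · split at hpa
          · injection hpa with hba
            exact Or.inl hba.symm
          · rcases i2 _ _ hpa with h1 | h1
            · exact Or.inl h1
            · right
              split
              · simp
              · exact h1
      · intro a hfa
        have hfa' := (hfr a).1 hfa
        obtain ⟨d1, d2, d3⟩ := i3 a hfa'
        have hane : a ≠ a0 := by
          rintro rfl
          exact hfresh (Or.inr (Or.inr ⟨DExp.data a, d1, rfl⟩))
        have haseg : a ≠ seg := by
          obtain ⟨-, -, -, -, -, -, -, -, hs⟩ := hfa'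
          exact hs
        refine ⟨?_, ?_, ?_⟩
        · rw [hdv]
          split
          · simp
          · exact d1
        · intro pe hpe
          rw [hh]
          rw [hv] at hpe
          split
          · exact fun hc => hane.symm (by injection hc)
          · split
            · exact fun hc => haseg.symm (by injection hc)
            · rename_i h1 h2
              rcases hpe with h3 | h3
              · rcases h3 with h4 | h4
                · exact absurd h4 h1
                · exact d2 _ h4
              · exact absurd h3 h2
        · intro j hj
          rw [hv] at hj
          rcases hj with h1 | h1
          · rcases h1 with h2 | h2
            · exact absurd h2 (by simp)
            · exact d3 j h2
          · obtain ⟨j', heq⟩ := h1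
            simp only [PExp.next.injEq] at heq
            exact hane heq.1
      · intro pe hpe a hpa
        rw [hv] at hpe
        have h1 : pe ≠ PExp.var p := fun hc => hpe (Or.inl (hc ▸ Set.mem_insert _ _))
        have h2 : ¬ ∃ j, pe = PExp.next a0 j := fun hc => hpe (Or.inr hc)
        have h3 : pe ∉ validOf seg τ := fun hc => hpe (Or.inl (Set.mem_insert_of_mem _ hc))
        rw [hh, if_neg h1, if_neg h2] at hpa
        rcases i4 pe h3 a hpa with h4 | ⟨b', j, rfl, hb⟩
        · exact Or.inl ((hfr a).2 h4)
        · exact Or.inr ⟨b', j, rfl, (hfr b').2 hb⟩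
  | @malloc2 τ ctrl t p c' a hmm hsem hstep hfreed ih =>
      exact absurd hmm (by simp)

/-- normal form of pointer races under garbage collection:
gcsem(P) is PRF iff no computation σ1.act1.σ2.act2 ∈ gcsem(P) first frees an
address `a ≠ seg` via act1 and then, via act2, frees, dereferences, or uses in
an assertion a pointer variable holding `a`. -/
theorem prf_normal_form (seg : A) (P : Program D PV DV T n) :
    SetPRF seg (gcsem seg P) ↔
    ¬ ∃ (σ1 : List (Act A D PV DV T n)) (act1 : Act A D PV DV T n)
        (σ2 : List (Act A D PV DV T n)) (act2 : Act A D PV DV T n)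
        (t1 : T) (p : PV) (a : A),
        (σ1 ++ [act1] ++ σ2 ++ [act2]) ∈ gcsem seg P ∧
        act1.tc = some (t1, Com.free p) ∧
        (heapOf σ1).pval (PExp.var p) = some a ∧ a ≠ seg ∧
        (∃ t2 com2, act2.tc = some (t2, com2) ∧
          ∃ q ∈ racyVars com2,
            (heapOf (σ1 ++ [act1] ++ σ2)).pval (PExp.var q) = some a) := by
  constructor
  · intro hprf
    rintro ⟨σ1, act1, σ2, act2, t1, p, a, hmem, htc1, hpv1, hane, t2, com2, htc2, q, hq, hpq⟩
    obtain ⟨c, hc⟩ := hmem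
    have hτsem : ∃ c', Sem seg P false (σ1 ++ [act1] ++ σ2) c' := by
      rcases sem_prefix [act2] (σ1 ++ [act1] ++ σ2) ⟨c, hc⟩ with hnil | h
      · exact absurd hnil (by simp)
      · exact h
    have hnpr : NoPR seg (σ1 ++ [act1] ++ σ2) := by
      intro ρ act σ' heq hps
      have hc2 : ∃ c0, Sem seg P false ((ρ ++ [act]) ++ (σ' ++ [act2])) c0 := by
        refine ⟨c, ?_⟩
        have he : (ρ ++ [act]) ++ (σ' ++ [act2]) = (σ1 ++ [act1] ++ σ2) ++ [act2] := by
          rw [heq]; simp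
        rw [he]; exact hc
      rcases sem_prefix _ _ hc2 with hnil | ⟨c0, hc0⟩
      · exact absurd hnil (by simp)
      · exact hprf _ ⟨c0, hc0⟩ ⟨ρ, act, rfl, hps⟩
    obtain ⟨c', hc'⟩ := hτsem
    obtain ⟨i1, i2, i3, i4⟩ := inv_of_sem hc' hnpr
    have hfreed : Freed seg (σ1 ++ [act1] ++ σ2) a :=
      ⟨σ1, act1, σ2, t1, p, rfl, htc1, hpv1, hane⟩
    have hqnv : PExp.var q ∉ validOf seg (σ1 ++ [act1] ++ σ2) :=
      fun hcv => (i3 a hfreed).2.1 _ hcv hpq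
    exact hprf _ ⟨c, hc⟩ ⟨σ1 ++ [act1] ++ σ2, act2, rfl, t2, com2, htc2, q, hq, hqnv⟩
  · intro hno
    suffices h : ∀ (N : ℕ) (σ : List (Act A D PV DV T n)), σ.length ≤ N →
        σ ∈ gcsem seg P → ¬ isPR seg σ by
      intro σ hσ
      exact h σ.length σ le_rfl hσ
    intro N
    induction N with
    | zero =>
        rintro σ hlen hσ ⟨τ, act, rfl, -⟩
        simp at hlen
    | succ N ihN =>
        rintro σ hlen hσ ⟨τ, act, rfl, hstep⟩
        obtain ⟨c, hc⟩ := hσ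
        have hnpr : NoPR seg τ := by
          intro ρ a' σ' heq hps
          have hc2 : ∃ c0, Sem seg P false ((ρ ++ [a']) ++ (σ' ++ [act])) c0 := by
            refine ⟨c, ?_⟩
            have he : (ρ ++ [a']) ++ (σ' ++ [act]) = τ ++ [act] := by rw [heq]; simp
            rw [he]; exact hc
          rcases sem_prefix _ _ hc2 with hnil | ⟨c0, hc0⟩
          · exact absurd hnil (by simp)
          · have hlt : (ρ ++ [a']).length ≤ N := by
              subst heq
              simp at hlen ⊢
              omega
            exact ihN _ hlt ⟨c0, hc0⟩ ⟨ρ, a', rfl, hps⟩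
        rcases sem_snoc hc with rfl | ⟨c', hc'⟩
        · obtain ⟨t, com, htc, q, hq, hnv⟩ := hstep
          exact hnv ⟨q, rfl⟩
        · obtain ⟨i1, i2, i3, i4⟩ := inv_of_sem hc' hnpr
          obtain ⟨t, com, htc, q, hq, hnv⟩ := hstep
          obtain ⟨a, hqa⟩ := Option.ne_none_iff_exists'.mp (i1 q)
          rcases i4 _ hnv a hqa with hfa | ⟨b, i, heq, -⟩
          · obtain ⟨σ1, act1, σ2, t1, p, rfl, htc1, hpv1, hane⟩ := hfa
            exact hno ⟨σ1, act1, σ2, act, t1, p, a, ⟨c, hc⟩, htc1, hpv1, hane,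
              t, com, htc, q, hq, hqa⟩
          · exact absurd heq (by simp)

end

end PRF
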